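/- arXiv:1205.7082 — 4 statements merged into one kernel-verified Lean document; each statement's English description precedes it below -/
import Mathlib

section
/- If Q is a self-adjoint operator on a Hilbert space H and S : H → H is a bounded invertible linear operator with bounded inverse, then for each α ∈ {−,0,+}, the signature σ_α(S*QS) equals σ_α(Q), where σ_α(Q) is the supremum of dimensions of finite-dimensional subspaces V of dom(Q) on which Q is negative definite (α = −), identically zero (α = 0), or positive definite (α = +). -/
/-! A bounded invertible `S` maps a subspace `V` bijectively onto `S V` of the same dimension, and
`⟪x, S†QS x⟫ = ⟪S x, Q (S x)⟫` while `S†QS x = 0 ↔ Q (S x) = 0` (`S†` is injective because `S` is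
onto). So `V ↦ S V` is a dimension-preserving bijection between the subspaces counted by `σ_α(S†QS)` and
by `σ_α(Q)`. -/

open Module RCLike

variable {𝕜 H : Type*} [RCLike 𝕜] [NormedAddCommGroup H] [InnerProductSpace 𝕜 H]
  [CompleteSpace H]

/-- σ₋: supremum of dimensions of nontrivial finite-dimensional subspaces on which
the quadratic form of `Q` is negative definite. -/
noncomputable def opSigNeg (Q : H →ₗ[𝕜] H) : ℕ∞ :=
  sSup {n : ℕ∞ | ∃ V : Submodule 𝕜 H, V ≠ ⊥ ∧ FiniteDimensional 𝕜 V ∧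
    n = (Module.finrank 𝕜 V : ℕ∞) ∧ ∀ x ∈ V, x ≠ 0 → re (inner 𝕜 x (Q x) : 𝕜) < 0}

/-- σ₀: supremum of dimensions of nontrivial finite-dimensional subspaces on which
`Q` is identically zero. -/
noncomputable def sigZero (Q : H →ₗ[𝕜] H) : ℕ∞ :=
  sSup {n : ℕ∞ | ∃ V : Submodule 𝕜 H, V ≠ ⊥ ∧ FiniteDimensional 𝕜 V ∧
    n = (Module.finrank 𝕜 V : ℕ∞) ∧ ∀ x ∈ V, Q x = 0}

/-- σ₊: supremum of dimensions of nontrivial finite-dimensional subspaces on which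
the quadratic form of `Q` is positive definite. -/
noncomputable def opSigPos (Q : H →ₗ[𝕜] H) : ℕ∞ :=
  sSup {n : ℕ∞ | ∃ V : Submodule 𝕜 H, V ≠ ⊥ ∧ FiniteDimensional 𝕜 V ∧
    n = (Module.finrank 𝕜 V : ℕ∞) ∧ ∀ x ∈ V, x ≠ 0 → 0 < re (inner 𝕜 x (Q x) : 𝕜)}

section FinrankSup

variable {K E F : Type*} [Field K] [AddCommGroup E] [Module K E] [AddCommGroup F] [Module K F]

variable (K) in
noncomputable def supFinrank (P : E → Prop) : ℕ∞ :=
  sSup {n : ℕ∞ | ∃ V : Submodule K E, V ≠ ⊥ ∧ FiniteDimensional K V ∧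
    n = (Module.finrank K V : ℕ∞) ∧ ∀ x ∈ V, P x}

theorem supFinrank_le_of_linearEquiv (e : E ≃ₗ[K] F) {P : E → Prop} {P' : F → Prop}
    (h : ∀ x, P x → P' (e x)) : supFinrank K P ≤ supFinrank K P' := by
  refine sSup_le_sSup ?_
  rintro n ⟨V, hV, _, rfl, hP⟩
  refine ⟨V.map (e : E →ₗ[K] F), Submodule.map_ne_bot_iff.mpr hV, Module.Finite.map V _,
    by rw [LinearEquiv.finrank_map_eq], ?_⟩
  rintro _ ⟨x, hx, rfl⟩
  exact h x (hP x hx)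

theorem supFinrank_eq_of_linearEquiv (e : E ≃ₗ[K] F) {P : E → Prop} {P' : F → Prop}
    (h : ∀ x, P x ↔ P' (e x)) : supFinrank K P = supFinrank K P' :=
  le_antisymm (supFinrank_le_of_linearEquiv e fun x => (h x).1)
    (supFinrank_le_of_linearEquiv e.symm fun y hy => (h _).2 (by rwa [e.apply_symm_apply]))

end FinrankSup

section Adjoint

variable {E F : Type*} [NormedAddCommGroup E] [InnerProductSpace 𝕜 E]
  [CompleteSpace E] [NormedAddCommGroup F] [InnerProductSpace 𝕜 F] [CompleteSpace F]

open ContinuousLinearMap InnerProduct in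
theorem adjoint_apply_eq_zero_iff {S : E →L[𝕜] F} (hS : Function.Surjective S) {y : F} :
    (S†) y = 0 ↔ y = 0 := by
  have : (S†).ker = ⊥ := by
    rw [← orthogonal_range, LinearMap.range_eq_top.mpr hS, Submodule.top_orthogonal_eq_bot]
  rw [← coe_coe, ← LinearMap.mem_ker, this, Submodule.mem_bot]

end Adjoint

theorem sylvester_law_of_inertia_general (Q : H →ₗ[𝕜] H)
    (S : H ≃L[𝕜] H) :
    opSigNeg ((ContinuousLinearMap.adjoint (S : H →L[𝕜] H)).toLinearMap ∘ₗ Q ∘ₗ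
        (S : H →L[𝕜] H).toLinearMap) = opSigNeg Q ∧
    sigZero ((ContinuousLinearMap.adjoint (S : H →L[𝕜] H)).toLinearMap ∘ₗ Q ∘ₗ
        (S : H →L[𝕜] H).toLinearMap) = sigZero Q ∧
    opSigPos ((ContinuousLinearMap.adjoint (S : H →L[𝕜] H)).toLinearMap ∘ₗ Q ∘ₗ
        (S : H →L[𝕜] H).toLinearMap) = opSigPos Q := by
  refine ⟨?_, ?_, ?_⟩ <;> refine supFinrank_eq_of_linearEquiv S.toLinearEquiv fun x => ?_
  · simp [ContinuousLinearMap.adjoint_inner_right]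
  · exact adjoint_apply_eq_zero_iff (S := (S : H →L[𝕜] H)) S.surjective
  · simp [ContinuousLinearMap.adjoint_inner_right]

/-- Sylvester's law of inertia: the signature is invariant under congruence by a
bounded invertible operator with bounded inverse. -/
theorem sylvester_law_of_inertia (Q : H →ₗ[𝕜] H) (hQ : LinearMap.IsSymmetric Q)
    (S : H ≃L[𝕜] H) :
    opSigNeg ((ContinuousLinearMap.adjoint (S : H →L[𝕜] H)).toLinearMap ∘ₗ Q ∘ₗ
        (S : H →L[𝕜] H).toLinearMap) = opSigNeg Q ∧
    sigZero ((ContinuousLinearMap.adjoint (S : H →L[𝕜] H)).toLinearMap ∘ₗ Q ∘ₗ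
        (S : H →L[𝕜] H).toLinearMap) = sigZero Q ∧
    opSigPos ((ContinuousLinearMap.adjoint (S : H →L[𝕜] H)).toLinearMap ∘ₗ Q ∘ₗ
        (S : H →L[𝕜] H).toLinearMap) = opSigPos Q :=
  sylvester_law_of_inertia_general Q S
end

section
/- Let M be a linear operator on a finite-dimensional inner product space with (1/2)(M + M*) ≥ 0 and ker M = ker((1/2)(M + M*)). Then for any smooth energy E, every solution X(t) of dX/dt = −M(X)∇E(X) (with M constant or depending smoothly on X, each M(X) satisfying the above) for which E(X(t)) is constant in t is stationary: dX/dt ≡ 0. -/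
open RealInnerProductSpace ContinuousLinearMap

lemma psd_inner_self_zero {H : Type*} [NormedAddCommGroup H] [InnerProductSpace ℝ H]
    [CompleteSpace H] (T : H →L[ℝ] H) (hsa : adjoint T = T)
    (hpos : ∀ x, 0 ≤ ⟪x, T x⟫) (v : H) (hv : ⟪v, T v⟫ = 0) : T v = 0 := by
  by_contra h
  have ha : (0:ℝ) < ‖T v‖ ^ 2 := pow_pos (norm_pos_iff.mpr h) 2
  set a := ‖T v‖ ^ 2 with hadef
  set c := ⟪T v, T (T v)⟫ with hcdef
  have hc : 0 ≤ c := hpos _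
  set s : ℝ := -a / (c + 1) with hsdef
  have hsymm : ⟪T v, T v⟫ = a := real_inner_self_eq_norm_sq _
  have hswap : ⟪v, T (T v)⟫ = a := by
    have h2 := adjoint_inner_right T v (T v)
    rw [hsa] at h2
    rw [h2, hsymm]
  have hkey := hpos (v + s • T v)
  have hexp : ⟪v + s • T v, T (v + s • T v)⟫ = 2 * s * a + s ^ 2 * c := by
    simp only [map_add, map_smul, inner_add_left, inner_add_right,
      real_inner_smul_left, real_inner_smul_right, hv, hswap, hsymm, ← hcdef]
    ring
  rw [hexp, hsdef] at hkey
  have hc1 : (0:ℝ) < c + 1 := by linarith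
  have hne : c + 1 ≠ 0 := ne_of_gt hc1
  have heq : 2 * (-a / (c + 1)) * a + (-a / (c + 1)) ^ 2 * c
      = (a ^ 2 * c - 2 * a ^ 2 * (c + 1)) / (c + 1) ^ 2 := by
    field_simp; ring
  rw [heq, le_div_iff₀ (by positivity)] at hkey
  nlinarith [mul_pos ha ha]

/-- Constant-energy solutions of a coercive quasi-gradient system
`dX/dt = -M(X) ∇E(X)` (with `M + M* ≥ 0` and `ker M = ker((M+M*)/2)`)
are stationary. -/
theorem constant_energy_solutions_stationary
    {H : Type*} [NormedAddCommGroup H] [InnerProductSpace ℝ H]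
    [FiniteDimensional ℝ H]
    (M : H → H →L[ℝ] H)
    (hMsmooth : ContDiff ℝ (⊤ : ℕ∞) M)
    (hsemi : ∀ X x, 0 ≤ ⟪x, (M X + adjoint (M X)) x⟫)
    (hker : ∀ X x, M X x = 0 ↔ ((1 / 2 : ℝ) • (M X + adjoint (M X))) x = 0)
    (E : H → ℝ) (hE : ContDiff ℝ (⊤ : ℕ∞) E)
    (X : ℝ → H)
    (hX : ∀ t, HasDerivAt X (-(M (X t) (gradient E (X t)))) t)
    (hconst : ∀ t, E (X t) = E (X 0)) :
    ∀ t, M (X t) (gradient E (X t)) = 0 := by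
  intro t
  set v := gradient E (X t) with hvdef
  set A := M (X t) with hAdef
  have hdiff : DifferentiableAt ℝ E (X t) := (hE.differentiable (by simp)).differentiableAt
  have hg : HasGradientAt E v (X t) := hdiff.hasGradientAt
  have hfd := hasGradientAt_iff_hasFDerivAt.mp hg
  have hcomp : HasDerivAt (fun s => E (X s))
      ((InnerProductSpace.toDualMap ℝ H v) (-(A v))) t :=
    hfd.comp_hasDerivAt t (hX t)
  have hconst' : HasDerivAt (fun s => E (X s)) 0 t := by
    have heq : (fun s => E (X s)) = fun _ => E (X 0) := funext hconst
    rw [heq]; exact hasDerivAt_const t _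
  have hz : ⟪v, -(A v)⟫ = 0 := by
    have h0 := hcomp.unique hconst'
    simpa [InnerProductSpace.toDualMap_apply_apply] using h0
  have hMv : ⟪v, A v⟫ = 0 := by
    rw [inner_neg_right] at hz; linarith
  have hT0 : ⟪v, (A + adjoint A) v⟫ = 0 := by
    have := adjoint_inner_right A v v
    rw [add_apply, inner_add_right, this]
    linarith [real_inner_comm (A v) v, hMv]
  have hsaT : adjoint (A + adjoint A) = A + adjoint A := by
    rw [map_add, adjoint_adjoint, add_comm]
  have hTv := psd_inner_self_zero _ hsaT (hsemi (X t)) v hT0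
  rw [hker (X t) v]
  show ((1 / 2 : ℝ) • (A + adjoint A)) v = 0
  rw [smul_apply, hTv, smul_zero]
end

section
/- Let A be a self-adjoint operator and M a bounded operator on a Hilbert space with M + M* ≥ 0 and ker M = ker((M+M*)/2). If Y satisfies M A Y = iμ Y for some real μ ≠ 0, then M A Y = 0, a contradiction; hence 0 is the only purely imaginary eigenvalue of M A. -/
open RCLike ContinuousLinearMap Complex

section

variable {H : Type*} [NormedAddCommGroup H] [InnerProductSpace ℂ H]

theorem LinearMap.IsSymmetric.re_inner_apply_mul_I_smul_eq_zero {A : H →ₗ[ℂ] H}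
    (hA : A.IsSymmetric) (y : H) (μ : ℝ) : (inner ℂ (A y) (((μ : ℂ) * I) • y)).re = 0 := by
  rw [inner_smul_right, ← hA.coe_re_inner_apply_self]
  simp

section

variable [CompleteSpace H]

theorem ContinuousLinearMap.IsPositive.apply_eq_zero_of_re_inner_self_eq_zero
    {T : H →L[ℂ] H} (hT : T.IsPositive) {x : H} (hx : (inner ℂ x (T x)).re = 0) :
    T x = 0 := by
  -- Writing `T = B* B`, the quadratic form of `T` at `x` is `‖B x‖²`.
  obtain ⟨B, rfl⟩ := CStarAlgebra.nonneg_iff_eq_star_mul_self.mp ((nonneg_iff_isPositive T).mpr hT)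
  have hBx : B x = 0 := by
    rw [star_eq_adjoint, mul_apply_eq_comp, adjoint_inner_right] at hx
    exact (re_inner_self_nonpos (𝕜 := ℂ)).mp hx.le
  simp [hBx]

theorem ContinuousLinearMap.re_inner_add_adjoint_apply_self (M : H →L[ℂ] H) (x : H) :
    (inner ℂ x ((M + adjoint M) x)).re = 2 * (inner ℂ x (M x)).re := by
  rw [add_apply, inner_add_right, adjoint_inner_right, ← inner_conj_symm, add_re, Complex.conj_re]
  ring

theorem ContinuousLinearMap.isPositive_add_adjoint {M : H →L[ℂ] H}
    (hM : ∀ x : H, 0 ≤ (inner ℂ x ((M + adjoint M) x)).re) : (M + adjoint M).IsPositive := by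
  refine isPositive_def'.mpr ⟨?_, fun x => ?_⟩
  · simpa only [star_eq_adjoint] using IsSelfAdjoint.add_star_self M
  · rw [reApplyInnerSelf_apply, ← inner_conj_symm, RCLike.conj_re]
    exact hM x

end

end

/-- For `A` self-adjoint and `M` with positive semidefinite symmetric part and
`ker M = ker(M + M*)`, the operator `MA` has no nonzero purely imaginary
eigenvalue: `MAY = iμY` with `μ ≠ 0` real forces `MAY = 0` and `Y = 0`. -/
theorem no_nonzero_imaginary_eigenvalue
    {H : Type*} [NormedAddCommGroup H] [InnerProductSpace ℂ H] [CompleteSpace H]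
    (A : H →ₗ[ℂ] H) (hA : LinearMap.IsSymmetric A)
    (M : H →L[ℂ] H)
    (hsemi : ∀ x : H, 0 ≤ ((inner ℂ x ((M + adjoint M) x) : ℂ)).re)
    (hker : ∀ x : H, M x = 0 ↔ (M + adjoint M) x = 0) :
    ∀ (Y : H) (μ : ℝ), μ ≠ 0 → M (A Y) = ((μ : ℂ) * Complex.I) • Y →
      M (A Y) = 0 ∧ Y = 0 := by
  intro Y μ hμ hMAY
  have hre : (inner ℂ (A Y) (M (A Y))).re = 0 := by
    rw [hMAY]
    exact hA.re_inner_apply_mul_I_smul_eq_zero Y μ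
  have hMAY_zero : M (A Y) = 0 := by
    refine (hker _).mpr ((isPositive_add_adjoint hsemi).apply_eq_zero_of_re_inner_self_eq_zero ?_)
    rw [re_inner_add_adjoint_apply_self, hre, mul_zero]
  refine ⟨hMAY_zero, ?_⟩
  rw [hMAY_zero, eq_comm, smul_eq_zero] at hMAY
  simpa [hμ, I_ne_zero] using hMAY
end

section
/- In finite dimensions, let M be a matrix with M + M* > 0 (strictly positive definite symmetric part) and A a symmetric matrix. If MAY = μY with Re μ > 0 (resp. Re μ < 0) and Y ≠ 0, then ⟨Y, AY⟩ > 0 (resp. ⟨Y, AY⟩ < 0). Consequently the number of eigenvalues of MA with positive real part is at most σ_+(A) and the number with negative real part is at most σ_−(A), counting the span of eigenvectors. -/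
open Module Matrix
open scoped ComplexOrder

noncomputable def sigNegOp {E : Type*} [NormedAddCommGroup E]
    [InnerProductSpace ℂ E] (Q : E →ₗ[ℂ] E) : ℕ∞ :=
  sSup {n : ℕ∞ | ∃ V : Submodule ℂ E, V ≠ ⊥ ∧ FiniteDimensional ℂ V ∧
    n = (Module.finrank ℂ V : ℕ∞) ∧ ∀ x ∈ V, x ≠ 0 → ((inner ℂ x (Q x) : ℂ)).re < 0}

noncomputable def sigPosOp {E : Type*} [NormedAddCommGroup E]
    [InnerProductSpace ℂ E] (Q : E →ₗ[ℂ] E) : ℕ∞ :=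
  sSup {n : ℕ∞ | ∃ V : Submodule ℂ E, V ≠ ⊥ ∧ FiniteDimensional ℂ V ∧
    n = (Module.finrank ℂ V : ℕ∞) ∧ ∀ x ∈ V, x ≠ 0 → 0 < ((inner ℂ x (Q x) : ℂ)).re}

/-!
Along `ẋ = -(M A) x` the form `q x = Re ⟪x, A x⟫` of the Hermitian `A` has derivative
`-2 Re ⟪A x, M A x⟫ ≤ 0`: it is a Lyapunov function. A vector `v` in the span of the eigenvectors
of `M A` with eigenvalues in the right half-plane starts a solution decaying to `0` (a combination
of the `e^{-μτ} Y`), so `q` is antitone along it with limit `0`, hence `q ≥ 0` on the whole orbit.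
If `v ≠ 0` then `A v ≠ 0`, since `M A` is injective on that span, so the derivative at `τ = 0` is
negative and `0` cannot be a minimum: `q v > 0`. Thus `A` is positive definite on the span, which
bounds its dimension by `σ₊(A)`; the stable eigenvectors are handled by the same argument for `-A`.
-/

open Filter Topology Submodule
open scoped InnerProductSpace

section
variable {E : Type*} [NormedAddCommGroup E] [InnerProductSpace ℂ E]

def unstableEigenvectors (T : Module.End ℂ E) : Set E :=
  {Y | Y ≠ 0 ∧ ∃ μ : ℂ, 0 < μ.re ∧ T Y = μ • Y}

theorem unstableEigenvectors_neg (T : Module.End ℂ E) :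
    unstableEigenvectors (-T) = {Y | Y ≠ 0 ∧ ∃ μ : ℂ, μ.re < 0 ∧ T Y = μ • Y} := by
  ext Y
  simp only [unstableEigenvectors, Set.mem_ofPred_eq, LinearMap.neg_apply, neg_eq_iff_eq_neg,
    ← neg_smul]
  constructor
  · rintro ⟨hY, μ, hμ, h⟩
    exact ⟨hY, -μ, by simpa using hμ, h⟩
  · rintro ⟨hY, μ, hμ, h⟩
    exact ⟨hY, -μ, by simpa using hμ, by simpa using h⟩

theorem exists_tendsto_zero_hasDerivAt_of_mem_span_unstableEigenvectors
    {T : Module.End ℂ E} {v : E} (hv : v ∈ span ℂ (unstableEigenvectors T)) :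
    ∃ x : ℝ → E, x 0 = v ∧ (∀ τ, HasDerivAt x (-T (x τ)) τ) ∧ Tendsto x atTop (𝓝 0) := by
  induction hv using Submodule.span_induction with
  | mem Y hY =>
    obtain ⟨-, μ, hμ, hTY⟩ := hY
    refine ⟨fun τ ↦ Complex.exp (-(μ * τ)) • Y, by simp, fun τ ↦ ?_, ?_⟩
    · have hexp : HasDerivAt (fun τ : ℝ ↦ Complex.exp (-(μ * τ)))
          (Complex.exp (-(μ * τ)) * -μ) τ := by
        simpa using ((Complex.ofRealCLM.hasDerivAt.const_mul μ).neg).cexp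
      convert hexp.smul_const Y using 1
      rw [map_smul, hTY, smul_smul, ← neg_smul, mul_neg]
    · have hnorm : Tendsto (fun τ : ℝ ↦ ‖Complex.exp (-(μ * τ))‖) atTop (𝓝 0) := by
        simp only [Complex.norm_exp, Complex.neg_re, Complex.re_mul_ofReal]
        exact Real.tendsto_exp_neg_atTop_nhds_zero.comp (tendsto_id.const_mul_atTop hμ)
      simpa using (tendsto_zero_iff_norm_tendsto_zero.2 hnorm).smul_const Y
  | zero => exact ⟨fun _ ↦ 0, rfl, fun τ ↦ by simp [hasDerivAt_const], tendsto_const_nhds⟩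
  | add v w _ _ hv hw =>
    obtain ⟨x, rfl, hx, hx0⟩ := hv
    obtain ⟨y, rfl, hy, hy0⟩ := hw
    exact ⟨fun τ ↦ x τ + y τ, rfl,
      fun τ ↦ ((hx τ).add (hy τ)).congr_deriv (by simp [add_comm]), by simpa using hx0.add hy0⟩
  | smul a v _ hv =>
    obtain ⟨x, rfl, hx, hx0⟩ := hv
    exact ⟨fun τ ↦ a • x τ, rfl, fun τ ↦ ((hx τ).const_smul a).congr_deriv (by simp),
      by simpa using hx0.const_smul a⟩

theorem disjoint_span_unstableEigenvectors_ker (T : Module.End ℂ E) :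
    Disjoint (span ℂ (unstableEigenvectors T)) (LinearMap.ker T) := by
  have hle : span ℂ (unstableEigenvectors T) ≤ ⨆ (μ) (_ : μ ≠ 0), T.eigenspace μ := by
    refine span_le.2 fun Y ⟨_, μ, hμ, hTY⟩ ↦ ?_
    have hμ0 : μ ≠ 0 := by rintro rfl; simp at hμ
    exact le_iSup₂ (f := fun μ (_ : μ ≠ 0) ↦ T.eigenspace μ) μ hμ0
      (Module.End.mem_eigenspace_iff.2 hTY)
  rw [← Module.End.eigenspace_zero]
  exact (T.eigenspaces_iSupIndep 0).symm.mono_left hle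

theorem finrank_le_sigPosOp {Q : Module.End ℂ E} {V : Submodule ℂ E} [FiniteDimensional ℂ V]
    (hV : ∀ x ∈ V, x ≠ 0 → 0 < (⟪x, Q x⟫_ℂ).re) : (finrank ℂ V : ℕ∞) ≤ sigPosOp Q := by
  rcases eq_or_ne V ⊥ with rfl | hV0
  · simp
  · exact le_sSup ⟨V, hV0, inferInstance, rfl, hV⟩

theorem sigPosOp_neg (Q : Module.End ℂ E) : sigPosOp (-Q) = sigNegOp Q := by
  simp only [sigPosOp, sigNegOp, LinearMap.neg_apply, inner_neg_right, Complex.neg_re, neg_pos]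

variable [CompleteSpace E] {M A : Module.End ℂ E}

theorem hasDerivAt_re_inner_apply_self (hA : A.IsSymmetric) {x : ℝ → E} {τ : ℝ}
    (hx : HasDerivAt x (-(M * A) (x τ)) τ) :
    HasDerivAt (fun t ↦ (⟪x t, A (x t)⟫_ℂ).re) (-(2 * (⟪A (x τ), M (A (x τ))⟫_ℂ).re)) τ := by
  -- `A` is bounded by the Hellinger–Toeplitz theorem.
  have hAx : HasDerivAt (fun t ↦ A (x t)) (A (-(M * A) (x τ))) τ :=
    ((⟨A, hA.continuous⟩ : E →L[ℂ] E).restrictScalars ℝ).hasFDerivAt.comp_hasDerivAt τ hx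
  refine (Complex.reCLM.hasFDerivAt.comp_hasDerivAt τ (hx.inner ℂ hAx)).congr_deriv ?_
  simp only [Module.End.mul_apply, map_neg, inner_neg_right, inner_neg_left, ← hA (x τ),
    Complex.reCLM_apply, Complex.add_re, Complex.neg_re]
  rw [← inner_conj_symm (M (A (x τ))) (A (x τ)), Complex.conj_re]
  ring

theorem re_inner_apply_self_pos_of_tendsto (hM : ∀ v ≠ 0, 0 < (⟪v, M v⟫_ℂ).re)
    (hA : A.IsSymmetric) {x : ℝ → E} (hx : ∀ τ, HasDerivAt x (-(M * A) (x τ)) τ)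
    (hlim : Tendsto x atTop (𝓝 0)) (hAx : A (x 0) ≠ 0) :
    0 < (⟪x 0, A (x 0)⟫_ℂ).re := by
  set f := fun t ↦ (⟪x t, A (x t)⟫_ℂ).re
  have hf τ := hasDerivAt_re_inner_apply_self hA (hx τ)
  have hM_nonneg (v : E) : 0 ≤ (⟪v, M v⟫_ℂ).re := by
    rcases eq_or_ne v 0 with rfl | hv
    · simp
    · exact (hM v hv).le
  have hanti : Antitone f := antitone_of_hasDerivAt_nonpos hf fun τ ↦ by
    simpa using hM_nonneg (A (x τ))
  have hflim : Tendsto f atTop (𝓝 0) := by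
    have hcont : Continuous fun v ↦ (⟪v, A v⟫_ℂ).re := by
      have := hA.continuous
      fun_prop
    have := (hcont.tendsto 0).comp hlim
    rwa [map_zero, inner_zero_left, Complex.zero_re] at this
  have hf_nonneg (t : ℝ) : 0 ≤ f t := hanti.le_of_tendsto hflim t
  by_contra! hf0
  have hmin : IsLocalMin f 0 := Eventually.of_forall fun t ↦ hf0.trans (hf_nonneg t)
  have := hmin.hasDerivAt_eq_zero (hf 0)
  linarith [hM _ hAx]

theorem re_inner_apply_self_pos_of_mem_span_unstableEigenvectors
    (hM : ∀ v ≠ 0, 0 < (⟪v, M v⟫_ℂ).re) (hA : A.IsSymmetric) {v : E}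
    (hv : v ∈ span ℂ (unstableEigenvectors (M * A))) (hv0 : v ≠ 0) :
    0 < (⟪v, A v⟫_ℂ).re := by
  obtain ⟨x, rfl, hx, hlim⟩ := exists_tendsto_zero_hasDerivAt_of_mem_span_unstableEigenvectors hv
  refine re_inner_apply_self_pos_of_tendsto hM hA hx hlim fun hAx ↦ hv0 ?_
  exact disjoint_def.1 (disjoint_span_unstableEigenvectors_ker _) _ hv
    (by rw [LinearMap.mem_ker, Module.End.mul_apply, hAx, map_zero])

end

theorem Matrix.PosDef.re_inner_toEuclideanLin_pos {ι : Type*} [Fintype ι] [DecidableEq ι]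
    {M : Matrix ι ι ℂ} (hM : (M + Mᴴ).PosDef) {v : EuclideanSpace ℂ ι} (hv : v ≠ 0) :
    0 < (⟪v, toEuclideanLin M v⟫_ℂ).re := by
  have h : 0 < (⟪v, toEuclideanLin (M + Mᴴ) v⟫_ℂ).re := by
    have h := hM.re_dotProduct_pos (x := WithLp.ofLp v) (by simpa using hv)
    rwa [dotProduct_comm] at h
  rw [map_add, toEuclideanLin_conjTranspose_eq_adjoint, LinearMap.add_apply, inner_add_right,
    LinearMap.adjoint_inner_right, Complex.add_re, ← inner_conj_symm (toEuclideanLin M v) v,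
    Complex.conj_re] at h
  linarith

/-- Counting inequality for quasi-gradient linearizations in finite dimensions:
eigenvectors of `MA` with eigenvalue of positive (negative) real part carry
positive (negative) `A`-energy, and the span of the unstable (stable)
eigenvectors has dimension at most `σ₊(A)` (`σ₋(A)`). -/
theorem eigenvalue_counting_inequality {n : ℕ}
    (M A : Matrix (Fin n) (Fin n) ℂ)
    (hM : (M + Mᴴ).PosDef) (hA : A.IsHermitian) :
    (∀ (Y : EuclideanSpace ℂ (Fin n)) (μ : ℂ), Y ≠ 0 →
      Matrix.toEuclideanLin (M * A) Y = μ • Y →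
      ((0 < μ.re → 0 < ((inner ℂ Y (Matrix.toEuclideanLin A Y) : ℂ)).re) ∧
       (μ.re < 0 → ((inner ℂ Y (Matrix.toEuclideanLin A Y) : ℂ)).re < 0))) ∧
    ((Module.finrank ℂ ↥(Submodule.span ℂ {Y : EuclideanSpace ℂ (Fin n) | Y ≠ 0 ∧
        ∃ μ : ℂ, 0 < μ.re ∧ Matrix.toEuclideanLin (M * A) Y = μ • Y}) : ℕ∞)
      ≤ sigPosOp (Matrix.toEuclideanLin A)) ∧
    ((Module.finrank ℂ ↥(Submodule.span ℂ {Y : EuclideanSpace ℂ (Fin n) | Y ≠ 0 ∧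
        ∃ μ : ℂ, μ.re < 0 ∧ Matrix.toEuclideanLin (M * A) Y = μ • Y}) : ℕ∞)
      ≤ sigNegOp (Matrix.toEuclideanLin A)) := by
  set M' := toEuclideanLin M
  set A' := toEuclideanLin A
  have hM' : ∀ v ≠ 0, 0 < (⟪v, M' v⟫_ℂ).re := fun _ ↦ hM.re_inner_toEuclideanLin_pos
  have hA' : A'.IsSymmetric := isSymmetric_toEuclideanLin_iff.2 hA
  have hA'_neg : (-A').IsSymmetric := fun v w ↦ by simp [hA' v w]
  have pos := fun v ↦ re_inner_apply_self_pos_of_mem_span_unstableEigenvectors hM' hA' (v := v)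
  have neg := fun v ↦ re_inner_apply_self_pos_of_mem_span_unstableEigenvectors hM' hA'_neg (v := v)
  rw [mul_neg, unstableEigenvectors_neg] at neg
  rw [show toEuclideanLin (M * A) = M' * A' from toLpLin_mul_same 2 M A]
  refine ⟨fun Y μ hY hYμ ↦ ⟨fun hμ ↦ pos Y (subset_span ⟨hY, μ, hμ, hYμ⟩) hY, fun hμ ↦ ?_⟩,
    finrank_le_sigPosOp pos, sigPosOp_neg A' ▸ finrank_le_sigPosOp neg⟩
  simpa using neg Y (subset_span ⟨hY, μ, hμ, hYμ⟩) hY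
end
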